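/- arXiv:2002.09833 — 2 statements merged into one kernel-verified Lean document; each statement's English description precedes it below -/
import Mathlib

section
/- Let ρ be a density matrix on ℂ^N ⊗ ℂ^N and let X = (x_1,…,x_N) be an orthonormal basis of ℂ^N (a projective measurement on subsystem A). Then there exists a vector s^(x) ∈ ℝ^N with nonnegative entries arranged in descending order and summing to 1 such that: (i) for every orthonormal basis X' of ℂ^N, the majorized marginal distribution satisfies p(x|x') ≺ s^(x); and (ii) s^(x) is the least such upper bound, i.e., every vector t ∈ ℝ^N with nonnegative descending entries summing to 1 that satisfies p(x|x') ≺ t for all orthonormal bases X' also satisfies s^(x) ≺ t. In particular, s^(x) is the unique descending least upper bound and depends only on ρ and X. -/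
/-!
On sorted vectors, majorization compares the partial-sum sequences `k ↦ sumTop t k`, and a
sequence is such a partial-sum sequence (of a sorted nonnegative vector) exactly when it starts
at `0`, is nondecreasing and concave, and is eventually constant. These properties survive
pointwise infima, so the infimum over all sorted majorants of the marginals `p(x|x')` is the
partial-sum sequence of a sorted probability vector `s`, which is then the least majorant.
The majorants form a nonempty family because `(1, 0, …, 0)` majorizes every probability vector,
and the marginals are probability vectors because `ρ` is positive semidefinite of trace one and
the product basis `x_i ⊗ x'_j` is orthonormal. Uniqueness is the antisymmetry of majorization on
sorted vectors.
-/

open scoped BigOperators ComplexOrder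

/-- The descending rearrangement `v↓` of a vector `v ∈ ℝⁿ`. -/
noncomputable def descSort {n : ℕ} (v : Fin n → ℝ) : Fin n → ℝ :=
  fun i => v (Tuple.sort v i.rev)

/-- The sum of the `k` largest entries of `v`. -/
noncomputable def sumTop {n : ℕ} (v : Fin n → ℝ) (k : ℕ) : ℝ :=
  ∑ i ∈ Finset.univ.filter (fun i : Fin n => (i : ℕ) < k), descSort v i

/-- Majorization `v ≺ w`: for every `k`, the sum of the `k` largest entries of `v` is at
most that of `w`, and the total sums agree. -/
noncomputable def Majorizes {n : ℕ} (v w : Fin n → ℝ) : Prop :=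
  (∀ k : ℕ, sumTop v k ≤ sumTop w k) ∧ (∑ i, v i = ∑ i, w i)

/-- Weak majorization `v ≺_w w`: only the partial-sum inequalities are required. -/
noncomputable def WeakMajorizes {n : ℕ} (v w : Fin n → ℝ) : Prop :=
  ∀ k : ℕ, sumTop v k ≤ sumTop w k

/-- `x : Fin N → (Fin N → ℂ)` is an orthonormal basis of `ℂ^N` (with the standard
inner product): `⟨x i, x j⟩ = δ_{ij}`. -/
def IsONB {N : ℕ} (x : Fin N → Fin N → ℂ) : Prop :=
  ∀ i j, ∑ a, (starRingEnd ℂ) (x i a) * x j a = if i = j then 1 else 0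

/-- A density matrix on `ℂ^N ⊗ ℂ^N`: positive semidefinite with trace one. -/
def IsDensityMatrix {N : ℕ} (ρ : Matrix (Fin N × Fin N) (Fin N × Fin N) ℂ) : Prop :=
  ρ.PosSemidef ∧ ρ.trace = 1

/-- The joint outcome distribution `P_{ij} = ⟨x_i ⊗ x'_j, ρ (x_i ⊗ x'_j)⟩` of the
projective measurements given by the bases `x` (on subsystem A) and `x'` (on subsystem B). -/
noncomputable def jointProb {N : ℕ} (ρ : Matrix (Fin N × Fin N) (Fin N × Fin N) ℂ)
    (x x' : Fin N → Fin N → ℂ) (i j : Fin N) : ℝ :=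
  (∑ p : Fin N × Fin N, ∑ q : Fin N × Fin N,
    (starRingEnd ℂ) (x i p.1 * x' j p.2) * ρ p q * (x i q.1 * x' j q.2)).re

/-- The majorized marginal distribution `p(x|x') = Σ_j (v^{(j)})↓`, where `v^{(j)}` is the
`j`-th column of the joint distribution `P(X,X')`. -/
noncomputable def majMarginal {N : ℕ} (ρ : Matrix (Fin N × Fin N) (Fin N × Fin N) ℂ)
    (x x' : Fin N → Fin N → ℂ) : Fin N → ℝ :=
  fun i => ∑ j, descSort (fun a => jointProb ρ x x' a j) i

open Finset
open scoped Matrix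

section Majorization

variable {n : ℕ}

lemma sum_descSort (v : Fin n → ℝ) : ∑ i, descSort v i = ∑ i, v i :=
  (Equiv.sum_comp Fin.revPerm (v ∘ Tuple.sort v)).trans (Equiv.sum_comp (Tuple.sort v) v)

lemma antitone_descSort (v : Fin n → ℝ) : Antitone (descSort v) :=
  fun _ _ hij => Tuple.monotone_sort v (Fin.rev_le_rev.mpr hij)

lemma descSort_of_antitone {v : Fin n → ℝ} (hv : Antitone v) : descSort v = v := by
  have h : v ∘ Tuple.sort v = v ∘ Fin.revPerm :=
    (Tuple.comp_sort_eq_comp_iff_monotone.mpr fun _ _ hij => hv (Fin.rev_le_rev.mpr hij)).symm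
  funext i
  simpa [descSort] using congrFun h i.rev

lemma sumTop_zero (v : Fin n → ℝ) : sumTop v 0 = 0 := by
  simp [sumTop]

lemma sumTop_of_le (v : Fin n → ℝ) {k : ℕ} (hk : n ≤ k) : sumTop v k = ∑ i, v i := by
  rw [sumTop, filter_true_of_mem fun i _ => i.isLt.trans_le hk, sum_descSort]

lemma sumTop_succ (v : Fin n → ℝ) (k : ℕ) :
    sumTop v (k + 1) = sumTop v k + if h : k < n then descSort v ⟨k, h⟩ else 0 := by
  split_ifs with hk
  · have : univ.filter (fun i : Fin n => (i : ℕ) < k + 1) =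
        insert ⟨k, hk⟩ (univ.filter fun i : Fin n => (i : ℕ) < k) := by
      ext i
      simp only [mem_filter, mem_univ, true_and, mem_insert, Fin.ext_iff]
      omega
    rw [sumTop, this, sum_insert (by simp), add_comm, sumTop]
  · rw [sumTop_of_le v (by omega), sumTop_of_le v (by omega), add_zero]

lemma sumTop_mono {v : Fin n → ℝ} (hv : ∀ i, 0 ≤ v i) : Monotone (sumTop v) := by
  refine monotone_nat_of_le_succ fun k => ?_
  rw [sumTop_succ]
  split_ifs
  exacts [le_add_of_nonneg_right (hv _), (add_zero _).ge]

lemma sumTop_nonneg {v : Fin n → ℝ} (hv : ∀ i, 0 ≤ v i) (k : ℕ) : 0 ≤ sumTop v k :=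
  sumTop_zero v ▸ sumTop_mono hv k.zero_le

lemma sumTop_le_sum {v : Fin n → ℝ} (hv : ∀ i, 0 ≤ v i) (k : ℕ) : sumTop v k ≤ ∑ i, v i :=
  sumTop_of_le v (le_max_left n k) ▸ sumTop_mono hv (le_max_right n k)

lemma sumTop_add_sumTop_add_two_le {v : Fin n → ℝ} (hv : ∀ i, 0 ≤ v i) (k : ℕ) :
    sumTop v k + sumTop v (k + 2) ≤ sumTop v (k + 1) + sumTop v (k + 1) := by
  have : (if h : k + 1 < n then descSort v ⟨k + 1, h⟩ else 0) ≤
      (if h : k < n then descSort v ⟨k, h⟩ else 0) := by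
    split_ifs
    · exact antitone_descSort v (Nat.le_succ k)
    · omega
    · exact hv _
    · rfl
  rw [sumTop_succ v (k + 1), sumTop_succ v k]
  linarith

lemma Majorizes.antisymm {v w : Fin n → ℝ} (hvw : Majorizes v w) (hwv : Majorizes w v)
    (hv : Antitone v) (hw : Antitone w) : v = w := by
  funext i
  have hv' := sumTop_succ v i
  have hw' := sumTop_succ w i
  simp only [i.isLt, dite_true, descSort_of_antitone hv, descSort_of_antitone hw] at hv' hw'
  linarith [hvw.1 i, hwv.1 i, hvw.1 (i + 1), hwv.1 (i + 1)]

lemma exists_majorant_of_sum_eq_one (hn : 0 < n) :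
    ∃ e : Fin n → ℝ, (∀ i, 0 ≤ e i) ∧ Antitone e ∧ ∑ i, e i = 1 ∧
      ∀ v : Fin n → ℝ, (∀ i, 0 ≤ v i) → ∑ i, v i = 1 → Majorizes v e := by
  set e : Fin n → ℝ := Pi.single ⟨0, hn⟩ 1
  have he : ∀ i, 0 ≤ e i := fun i => by
    by_cases hi : i = ⟨0, hn⟩ <;> simp [e, hi]
  have he_anti : Antitone e := fun i j hij => by
    by_cases hj : j = ⟨0, hn⟩
    · have : i = ⟨0, hn⟩ := Fin.ext (by have := Fin.le_def.mp hij; simp_all [Fin.ext_iff])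
      simp [e, this, hj]
    · simp [e, hj, he i]
  have he_sum : ∑ i, e i = 1 := by simp [e]
  refine ⟨e, he, he_anti, he_sum, fun v hv hv_sum => ⟨fun k => ?_, hv_sum.trans he_sum.symm⟩⟩
  rcases k with _ | k
  · simp [sumTop_zero]
  have he_one : sumTop e 1 = 1 := by
    simp [sumTop_succ, sumTop_zero, hn, descSort_of_antitone he_anti, e]
  calc sumTop v (k + 1) ≤ 1 := hv_sum ▸ sumTop_le_sum hv _
    _ = sumTop e 1 := he_one.symm
    _ ≤ sumTop e (k + 1) := sumTop_mono he (by omega)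

lemma exists_antitone_sumTop_eq {f : ℕ → ℝ} (hf₀ : f 0 = 0) (hf_mono : Monotone f)
    (hf_concave : ∀ k, f k + f (k + 2) ≤ f (k + 1) + f (k + 1))
    (hf_const : ∀ k, n ≤ k → f k = f n) :
    ∃ s : Fin n → ℝ, (∀ i, 0 ≤ s i) ∧ Antitone s ∧ ∀ k, sumTop s k = f k := by
  have hinc : Antitone fun k => f (k + 1) - f k :=
    antitone_nat_of_succ_le fun k => by linarith [hf_concave k]
  refine ⟨fun i => f (i + 1) - f i, fun i => sub_nonneg.mpr (hf_mono i.val.le_succ),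
    fun i j hij => hinc hij, fun k => ?_⟩
  induction k with
  | zero => rw [sumTop_zero, hf₀]
  | succ k ih =>
    rw [sumTop_succ, ih, descSort_of_antitone fun i j hij => hinc hij]
    split_ifs with hk
    · ring
    · rw [add_zero, hf_const k (by omega), hf_const (k + 1) (by omega)]

lemma exists_isGLB_sumTop {S : Set (Fin n → ℝ)} (hS : S.Nonempty)
    (hS_prob : ∀ t ∈ S, (∀ i, 0 ≤ t i) ∧ ∑ i, t i = 1) :
    ∃ s : Fin n → ℝ, (∀ i, 0 ≤ s i) ∧ Antitone s ∧ ∑ i, s i = 1 ∧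
      ∀ k, IsGLB ((sumTop · k) '' S) (sumTop s k) := by
  set f : ℕ → ℝ := fun k => sInf ((sumTop · k) '' S)
  have hf : ∀ k, IsGLB ((sumTop · k) '' S) (f k) := fun k =>
    isGLB_csInf (hS.image _) ⟨0, by
      rintro _ ⟨t, ht, rfl⟩
      exact sumTop_nonneg (hS_prob t ht).1 k⟩
  have hf_le : ∀ k, ∀ t ∈ S, f k ≤ sumTop t k := fun k t ht => (hf k).1 ⟨t, ht, rfl⟩
  have le_hf : ∀ k c, (∀ t ∈ S, c ≤ sumTop t k) → c ≤ f k := fun k c hc =>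
    (hf k).2 (by rintro _ ⟨t, ht, rfl⟩; exact hc t ht)
  obtain ⟨t₀, ht₀⟩ := hS
  have hf_top : ∀ k, n ≤ k → f k = 1 := fun k hk => le_antisymm
    ((hf_le k t₀ ht₀).trans_eq <| (sumTop_of_le t₀ hk).trans (hS_prob t₀ ht₀).2)
    (le_hf k 1 fun t ht => ((sumTop_of_le t hk).trans (hS_prob t ht).2).ge)
  obtain ⟨s, hs_nonneg, hs_anti, hs⟩ := exists_antitone_sumTop_eq (f := f)
    (le_antisymm ((hf_le 0 t₀ ht₀).trans_eq (sumTop_zero t₀))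
      (le_hf 0 0 fun t _ => (sumTop_zero t).ge))
    (monotone_nat_of_le_succ fun k => le_hf (k + 1) (f k) fun t ht =>
      (hf_le k t ht).trans (sumTop_mono (hS_prob t ht).1 k.le_succ))
    (fun k => by
      suffices (f k + f (k + 2)) / 2 ≤ f (k + 1) by linarith
      refine le_hf (k + 1) _ fun t ht => ?_
      linarith [hf_le k t ht, hf_le (k + 2) t ht,
        sumTop_add_sumTop_add_two_le (hS_prob t ht).1 k])
    (fun k hk => (hf_top k hk).trans (hf_top n le_rfl).symm)
  refine ⟨s, hs_nonneg, hs_anti, ?_, fun k => hs k ▸ hf k⟩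
  rw [← sumTop_of_le s le_rfl, hs, hf_top n le_rfl]

theorem existsUnique_least_majorant (hn : 0 < n) {V : Set (Fin n → ℝ)}
    (hV : ∀ v ∈ V, (∀ i, 0 ≤ v i) ∧ ∑ i, v i = 1) :
    ∃! s : Fin n → ℝ, (∀ i, 0 ≤ s i) ∧ Antitone s ∧ ∑ i, s i = 1 ∧ (∀ v ∈ V, Majorizes v s) ∧
      ∀ t : Fin n → ℝ, (∀ i, 0 ≤ t i) → Antitone t → ∑ i, t i = 1 →
        (∀ v ∈ V, Majorizes v t) → Majorizes s t := by
  set S := {t : Fin n → ℝ | (∀ i, 0 ≤ t i) ∧ Antitone t ∧ ∑ i, t i = 1 ∧ ∀ v ∈ V, Majorizes v t}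
  have hS : S.Nonempty := by
    obtain ⟨e, he, he_anti, he_sum, he_maj⟩ := exists_majorant_of_sum_eq_one hn
    exact ⟨e, he, he_anti, he_sum, fun v hv => he_maj v (hV v hv).1 (hV v hv).2⟩
  obtain ⟨s, hs, hs_anti, hs_sum, hs_glb⟩ := exists_isGLB_sumTop hS fun t ht => ⟨ht.1, ht.2.2.1⟩
  have hs_upper : ∀ v ∈ V, Majorizes v s := fun v hv =>
    ⟨fun k => (hs_glb k).2 (by rintro _ ⟨t, ht, rfl⟩; exact (ht.2.2.2 v hv).1 k),
      (hV v hv).2.trans hs_sum.symm⟩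
  have hs_least : ∀ t ∈ S, Majorizes s t := fun t ht =>
    ⟨fun k => (hs_glb k).1 ⟨t, ht, rfl⟩, hs_sum.trans ht.2.2.1.symm⟩
  refine ⟨s, ⟨hs, hs_anti, hs_sum, hs_upper, fun t h h_anti h_sum h_upper =>
    hs_least t ⟨h, h_anti, h_sum, h_upper⟩⟩, ?_⟩
  rintro s' ⟨h, h_anti, h_sum, h_upper, h_least⟩
  exact (h_least s hs hs_anti hs_sum hs_upper).antisymm (hs_least s' ⟨h, h_anti, h_sum, h_upper⟩)
    h_anti hs_anti

end Majorization

section Measurement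

variable {N : ℕ}

lemma IsONB.conjTranspose_mul_self {x : Fin N → Fin N → ℂ} (hx : IsONB x) :
    (Matrix.of x)ᴴ * Matrix.of x = 1 := by
  rw [mul_eq_one_comm]
  ext i j
  simpa [Matrix.mul_apply, Matrix.one_apply, mul_comm, eq_comm] using hx j i

lemma IsONB.sum_conj_mul {x : Fin N → Fin N → ℂ} (hx : IsONB x) (a b : Fin N) :
    ∑ i, (starRingEnd ℂ) (x i a) * x i b = if a = b then 1 else 0 := by
  simpa [Matrix.mul_apply, Matrix.one_apply] using
    congrFun (congrFun hx.conjTranspose_mul_self a) b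

lemma IsONB.sum_conj_mul_prod {x x' : Fin N → Fin N → ℂ} (hx : IsONB x) (hx' : IsONB x')
    (p q : Fin N × Fin N) :
    ∑ i, ∑ j, (starRingEnd ℂ) (x i p.1 * x' j p.2) * (x i q.1 * x' j q.2) =
      if p = q then 1 else 0 := by
  calc ∑ i, ∑ j, (starRingEnd ℂ) (x i p.1 * x' j p.2) * (x i q.1 * x' j q.2)
      = (∑ i, (starRingEnd ℂ) (x i p.1) * x i q.1) *
          ∑ j, (starRingEnd ℂ) (x' j p.2) * x' j q.2 := by
        rw [sum_mul_sum]
        exact sum_congr rfl fun _ _ => sum_congr rfl fun _ _ => by rw [map_mul]; ring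
    _ = if p = q then 1 else 0 := by
        rw [hx.sum_conj_mul, hx'.sum_conj_mul, ite_zero_mul_ite_zero, one_mul]
        simp only [Prod.ext_iff]

lemma jointProb_eq_re_dotProduct (ρ : Matrix (Fin N × Fin N) (Fin N × Fin N) ℂ)
    (x x' : Fin N → Fin N → ℂ) (i j : Fin N) :
    jointProb ρ x x' i j =
      (star (fun p : Fin N × Fin N => x i p.1 * x' j p.2) ⬝ᵥ
        ρ *ᵥ fun p : Fin N × Fin N => x i p.1 * x' j p.2).re := by
  simp only [jointProb, dotProduct, Matrix.mulVec, Pi.star_apply, mul_sum, starRingEnd_apply,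
    mul_assoc]

lemma jointProb_nonneg {ρ : Matrix (Fin N × Fin N) (Fin N × Fin N) ℂ} (hρ : ρ.PosSemidef)
    (x x' : Fin N → Fin N → ℂ) (i j : Fin N) : 0 ≤ jointProb ρ x x' i j := by
  rw [jointProb_eq_re_dotProduct]
  exact (Complex.le_def.mp (hρ.dotProduct_mulVec_nonneg _)).1

lemma sum_jointProb {ρ : Matrix (Fin N × Fin N) (Fin N × Fin N) ℂ} {x x' : Fin N → Fin N → ℂ}
    (hx : IsONB x) (hx' : IsONB x') : ∑ i, ∑ j, jointProb ρ x x' i j = (ρ.trace).re := by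
  have htrace : ∑ i, ∑ j, ∑ p, ∑ q,
      (starRingEnd ℂ) (x i p.1 * x' j p.2) * ρ p q * (x i q.1 * x' j q.2) = ρ.trace := by
    calc _ = ∑ p, ∑ q, ∑ i, ∑ j,
          (starRingEnd ℂ) (x i p.1 * x' j p.2) * ρ p q * (x i q.1 * x' j q.2) :=
          (sum_congr rfl fun _ _ => sum_comm.trans (sum_congr rfl fun _ _ => sum_comm)).trans
            (sum_comm.trans (sum_congr rfl fun _ _ => sum_comm))
      _ = ∑ p, ∑ q, ρ p q *
          ∑ i, ∑ j, (starRingEnd ℂ) (x i p.1 * x' j p.2) * (x i q.1 * x' j q.2) := by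
          simp only [mul_sum]
          exact sum_congr rfl fun _ _ => sum_congr rfl fun _ _ =>
            sum_congr rfl fun _ _ => sum_congr rfl fun _ _ => by ring
      _ = ρ.trace := by
          simp only [hx.sum_conj_mul_prod hx', mul_ite, mul_one, mul_zero, sum_ite_eq, mem_univ,
            if_true, Matrix.trace, Matrix.diag]
  simp only [jointProb, ← Complex.re_sum, htrace]

lemma majMarginal_nonneg {ρ : Matrix (Fin N × Fin N) (Fin N × Fin N) ℂ} (hρ : ρ.PosSemidef)
    (x x' : Fin N → Fin N → ℂ) (i : Fin N) : 0 ≤ majMarginal ρ x x' i :=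
  sum_nonneg fun j _ => jointProb_nonneg hρ x x' _ j

lemma sum_majMarginal {ρ : Matrix (Fin N × Fin N) (Fin N × Fin N) ℂ} {x x' : Fin N → Fin N → ℂ}
    (hx : IsONB x) (hx' : IsONB x') : ∑ i, majMarginal ρ x x' i = (ρ.trace).re := by
  simp only [majMarginal]
  rw [sum_comm]
  simp only [sum_descSort]
  rw [sum_comm, sum_jointProb hx hx']

end Measurement

/-- Given a density matrix `ρ` on `ℂ^N ⊗ ℂ^N` and a projective measurement
(orthonormal basis) `X` on subsystem A, there is a unique vector `s^(x) ∈ ℝ^N` with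
nonnegative entries, arranged in descending order and summing to `1`, such that
(i) `p(x|x') ≺ s^(x)` for every orthonormal basis `X'` of `ℂ^N`, and
(ii) `s^(x)` is the least such upper bound: any descending nonnegative `t` summing to `1`
which majorizes every `p(x|x')` also satisfies `s^(x) ≺ t`. -/
theorem least_upper_bound_of_majorized_marginals {N : ℕ}
    (ρ : Matrix (Fin N × Fin N) (Fin N × Fin N) ℂ) (hρ : IsDensityMatrix ρ)
    (x : Fin N → Fin N → ℂ) (hx : IsONB x) :
    ∃! s : Fin N → ℝ,
      (∀ i, 0 ≤ s i) ∧ Antitone s ∧ (∑ i, s i = 1) ∧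
      (∀ x' : Fin N → Fin N → ℂ, IsONB x' → Majorizes (majMarginal ρ x x') s) ∧
      (∀ t : Fin N → ℝ, (∀ i, 0 ≤ t i) → Antitone t → (∑ i, t i = 1) →
        (∀ x' : Fin N → Fin N → ℂ, IsONB x' → Majorizes (majMarginal ρ x x') t) →
        Majorizes s t) := by
  obtain ⟨hρ_psd, hρ_tr⟩ := hρ
  have hN : 0 < N := Nat.pos_of_ne_zero <| by
    rintro rfl
    simp [Matrix.trace] at hρ_tr
  have hprob : ∀ v ∈ {v | ∃ x', IsONB x' ∧ majMarginal ρ x x' = v},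
      (∀ i, 0 ≤ v i) ∧ ∑ i, v i = 1 := by
    rintro _ ⟨x', hx', rfl⟩
    exact ⟨majMarginal_nonneg hρ_psd x x', by rw [sum_majMarginal hx hx', hρ_tr, Complex.one_re]⟩
  simpa using existsUnique_least_majorant hN hprob
end

section
/- Let ξ ∈ (0, π/4] and θ ∈ (0, π/3], and set R = √(cos²θ + sin²θ·sin²(2ξ)). Then the vector s^(⊕) = ((1+R)/2, (1−R)/2, (1+R)/2, (1−R)/2) ∈ ℝ⁴ is NOT majorized by the vector s = (1, cos θ, 2 sin²(θ/2), 0) ∈ ℝ⁴; specifically, the sum of the two largest entries of s^(⊕) equals 1 + R, which strictly exceeds 1 + cos θ, the sum of the two largest entries of s. (Thus in the presence of quantum memory the single-particle quantum bound for the direct-sum majorization uncertainty relation of σ(θ,0) and σ(θ,π) can be broken whenever the state |ψ_ξ⟩ is entangled.) -/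
open scoped BigOperators ComplexOrder

lemma descSort_of_monotone {v : Fin 4 → ℝ} (σ : Equiv.Perm (Fin 4))
    (h : Monotone (v ∘ σ)) : descSort v = fun i => v (σ i.rev) := by
  funext i
  have := (Tuple.comp_sort_eq_comp_iff_monotone (f := v) (σ := σ)).2 h
  show (v ∘ Tuple.sort v) i.rev = (v ∘ σ) i.rev
  rw [← this]

lemma sumTop_two {v : Fin 4 → ℝ} (σ : Equiv.Perm (Fin 4))
    (h : Monotone (v ∘ σ)) : sumTop v 2 = v (σ 3) + v (σ 2) := by
  unfold sumTop
  rw [descSort_of_monotone σ h]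
  rw [show (Finset.univ.filter (fun i : Fin 4 => (i : ℕ) < 2)) = {0, 1} by decide]
  rw [Finset.sum_pair (by decide)]
  rfl

/-- permutation sorting ![a,b,a,b] (a ≥ b) ascending: b,b,a,a -/
def σ1 : Equiv.Perm (Fin 4) := ⟨![1,3,0,2], ![2,0,3,1], by decide, by decide⟩

def σ2 : Equiv.Perm (Fin 4) := ⟨![3,2,1,0], ![3,2,1,0], by decide, by decide⟩

/-- For `ξ ∈ (0, π/4]` and `θ ∈ (0, π/3]`, with
`R = √(cos²θ + sin²θ·sin²(2ξ))`, the vector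
`s^(⊕) = ((1+R)/2, (1−R)/2, (1+R)/2, (1−R)/2)` is not majorized by
`s = (1, cos θ, 2 sin²(θ/2), 0)`: the sum of the two largest entries of `s^(⊕)` is `1 + R`,
which strictly exceeds `1 + cos θ`, the sum of the two largest entries of `s`. -/
theorem memory_breaks_quantum_bound (ξ θ : ℝ)
    (hξ : ξ ∈ Set.Ioc 0 (Real.pi / 4)) (hθ : θ ∈ Set.Ioc 0 (Real.pi / 3))
    (R : ℝ) (hR : R = Real.sqrt (Real.cos θ ^ 2 + Real.sin θ ^ 2 * Real.sin (2 * ξ) ^ 2)) :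
    sumTop ![(1 + R) / 2, (1 - R) / 2, (1 + R) / 2, (1 - R) / 2] 2 = 1 + R ∧
    sumTop ![1, Real.cos θ, 2 * Real.sin (θ / 2) ^ 2, 0] 2 = 1 + Real.cos θ ∧
    1 + Real.cos θ < 1 + R ∧
    ¬ Majorizes ![(1 + R) / 2, (1 - R) / 2, (1 + R) / 2, (1 - R) / 2]
        ![1, Real.cos θ, 2 * Real.sin (θ / 2) ^ 2, 0] := by
  obtain ⟨hξ0, hξ4⟩ := hξ
  obtain ⟨hθ0, hθ3⟩ := hθ
  have hπ := Real.pi_pos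
  have hcosθ : Real.cos θ ≥ 1/2 := by
    have : Real.cos (Real.pi / 3) ≤ Real.cos θ :=
      Real.cos_le_cos_of_nonneg_of_le_pi (le_of_lt hθ0) (by linarith) hθ3
    rwa [Real.cos_pi_div_three] at this
  have hsinh : Real.sin (θ/2) > 0 :=
    Real.sin_pos_of_pos_of_lt_pi (by linarith) (by linarith)
  have hsin2 : 2 * Real.sin (θ / 2) ^ 2 = 1 - Real.cos θ := by
    have h2 := Real.cos_two_mul' (θ/2)
    rw [show 2*(θ/2) = θ by ring] at h2
    have h3 := Real.sin_sq_add_cos_sq (θ/2)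
    linarith
  have hcos1 : Real.cos θ < 1 := by nlinarith
  have hsinθ : Real.sin θ > 0 := Real.sin_pos_of_pos_of_lt_pi hθ0 (by linarith)
  have hsin2ξ : Real.sin (2 * ξ) > 0 := by
    apply Real.sin_pos_of_pos_of_lt_pi (by linarith); linarith
  have hRc : Real.cos θ < R := by
    rw [hR, Real.lt_sqrt (by linarith)]
    have : 0 < Real.sin θ ^ 2 * Real.sin (2*ξ) ^ 2 := by positivity
    linarith
  have hR1 : R ≤ 1 := by
    rw [hR, show (1:ℝ) = Real.sqrt 1 by simp]
    apply Real.sqrt_le_sqrt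
    nlinarith [Real.sin_sq_add_cos_sq θ, Real.sin_sq_le_one (2*ξ), sq_nonneg (Real.sin θ)]
  have hR0 : 0 < R := by linarith
  have e1 : sumTop ![(1 + R) / 2, (1 - R) / 2, (1 + R) / 2, (1 - R) / 2] 2 = 1 + R := by
    rw [sumTop_two σ1]
    · show (1+R)/2 + (1+R)/2 = 1 + R; ring
    · intro a b hab
      fin_cases a <;> fin_cases b <;> simp_all [σ1] <;> first | linarith | exact absurd hab (by decide)
  have e2 : sumTop ![1, Real.cos θ, 2 * Real.sin (θ / 2) ^ 2, 0] 2 = 1 + Real.cos θ := by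
    rw [sumTop_two σ2]
    · rfl
    · intro a b hab
      fin_cases a <;> fin_cases b <;> simp_all [σ2] <;> first | linarith | exact absurd hab (by decide)
  refine ⟨e1, e2, by linarith, ?_⟩
  rintro ⟨h, -⟩
  have := h 2
  rw [e1, e2] at this
  linarith
end
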